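/- arXiv:2207.14391 — 2 statements merged into one kernel-verified Lean document; each statement's English description precedes it below -/
import Mathlib

section
/- Let {X_t}_{t≥1} be a sequence of vectors in ℝ^d with ‖X_t‖₂ ≤ L for all t, let V ∈ ℝ^{d×d} be a positive definite matrix, and define V̄_t = V + Σ_{s=1}^{t} X_s X_sᵀ (with V̄_0 = V). Then for every n ≥ 1, Σ_{t=1}^{n} min{1, ‖X_t‖²_{V̄_{t-1}^{-1}}} ≤ 2·(log det(V̄_n) − log det(V)) ≤ 2·(d·log((trace(V) + n·L²)/d) − log det(V)). -/
/-!
By the matrix determinant lemma, `det V̄_t = det V̄_{t-1} · (1 + ‖X_t‖²_{V̄_{t-1}⁻¹})`, so the sum of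
`log (1 + ‖X_t‖²_{V̄_{t-1}⁻¹})` telescopes to `log det V̄_n - log det V`, and each summand is at least
`min {1, ‖X_t‖²_{V̄_{t-1}⁻¹}} / 2`. For the second inequality, concavity of `log` applied to the
eigenvalues gives `log det A ≤ d log (tr A / d)`, and `tr V̄_n ≤ tr V + n L²`.
-/

open Matrix

/-- Weighted norm `‖z‖_V = √(zᵀ V z)`. -/
noncomputable def wnorm {d : ℕ} (V : Matrix (Fin d) (Fin d) ℝ) (z : Fin d → ℝ) : ℝ :=
  Real.sqrt (z ⬝ᵥ V.mulVec z)

theorem wnorm_sq {d : ℕ} {V : Matrix (Fin d) (Fin d) ℝ} (hV : V.PosSemidef) (z : Fin d → ℝ) :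
    wnorm V z ^ 2 = z ⬝ᵥ V *ᵥ z :=
  Real.sq_sqrt (by simpa using hV.dotProduct_mulVec_nonneg z)

theorem min_one_le_two_mul_log_one_add {u : ℝ} (hu : 0 ≤ u) :
    min 1 u ≤ 2 * Real.log (1 + u) := by
  have hlog : u / (1 + u) ≤ Real.log (1 + u) := by
    have h := Real.log_le_sub_one_of_pos (x := (1 + u)⁻¹) (by positivity)
    rw [Real.log_inv] at h
    have h' : 1 - (1 + u)⁻¹ = u / (1 + u) := by field_simp; ring
    linarith
  rcases le_total u 1 with h | h
  · have : u / 2 ≤ u / (1 + u) := div_le_div_of_nonneg_left hu (by positivity) (by linarith)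
    rw [min_eq_right h]
    linarith
  · have : Real.log 2 ≤ Real.log (1 + u) := Real.log_le_log (by norm_num) (by linarith)
    rw [min_eq_left h]
    linarith [Real.log_two_gt_d9]

namespace Matrix

variable {n : Type*} [Fintype n] [DecidableEq n]

theorem det_add_vecMulVec {R : Type*} [CommRing R] {A : Matrix n n R} (hA : IsUnit A.det)
    (u v : n → R) : (A + vecMulVec u v).det = A.det * (1 + v ⬝ᵥ A⁻¹ *ᵥ u) := by
  rw [vecMulVec_eq Unit, det_add_replicateCol_mul_replicateRow hA,
    det_unique (_ : Matrix Unit Unit R), add_apply, one_apply_eq, ← replicateRow_vecMul, replicateRow_mul_replicateCol_apply,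
    dotProduct_mulVec]

theorem PosDef.log_det_le_card_mul_log_trace_div {A : Matrix n n ℝ} (hA : A.PosDef) :
    Real.log A.det ≤ Fintype.card n * Real.log (A.trace / Fintype.card n) := by
  cases isEmpty_or_nonempty n
  · simp
  have hcard : (0 : ℝ) < Fintype.card n := by exact_mod_cast Fintype.card_pos
  set μ := hA.isHermitian.eigenvalues
  have hdet : A.det = ∏ i, μ i := by simpa using hA.isHermitian.det_eq_prod_eigenvalues
  have htrace : A.trace = ∑ i, μ i := by simpa using hA.isHermitian.trace_eq_sum_eigenvalues
  have jensen := strictConcaveOn_log_Ioi.concaveOn.le_map_sum (t := Finset.univ)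
    (w := fun _ => (Fintype.card n : ℝ)⁻¹) (p := μ) (fun _ _ => by positivity)
    (by simp [hcard.ne']) (fun i _ => hA.eigenvalues_pos i)
  simp only [smul_eq_mul, ← Finset.mul_sum] at jensen
  rw [hdet, Real.log_prod fun i _ => (hA.eigenvalues_pos i).ne', htrace, div_eq_inv_mul]
  exact (inv_mul_le_iff₀ hcard).mp jensen

theorem PosDef.log_det_le_card_mul_log_div_of_trace_le {A : Matrix n n ℝ} (hA : A.PosDef) {c : ℝ}
    (hc : A.trace ≤ c) : Real.log A.det ≤ Fintype.card n * Real.log (c / Fintype.card n) := by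
  refine hA.log_det_le_card_mul_log_trace_div.trans ?_
  cases isEmpty_or_nonempty n
  · simp
  have := hA.trace_pos
  gcongr

end Matrix

section RegularizedGram

variable {n : Type*} (V : Matrix n n ℝ) (X : ℕ → n → ℝ)

def regularizedGram (t : ℕ) : Matrix n n ℝ :=
  V + ∑ s ∈ Finset.Icc 1 t, vecMulVec (X s) (X s)

@[simp]
theorem regularizedGram_zero : regularizedGram V X 0 = V := by
  simp [regularizedGram]

theorem regularizedGram_succ (t : ℕ) :
    regularizedGram V X (t + 1) = regularizedGram V X t + vecMulVec (X (t + 1)) (X (t + 1)) := by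
  rw [regularizedGram, regularizedGram, Finset.sum_Icc_succ_top (by omega), add_assoc]

variable {V} [Fintype n]

theorem posDef_regularizedGram (hV : V.PosDef) (t : ℕ) : (regularizedGram V X t).PosDef :=
  hV.add_posSemidef <| Finset.sum_induction _ _ (fun _ _ => PosSemidef.add) PosSemidef.zero
    fun s _ => by simpa using posSemidef_vecMulVec_self_star (X s)

theorem trace_regularizedGram_le {c : ℝ} (hX : ∀ t, X t ⬝ᵥ X t ≤ c) (N : ℕ) :
    (regularizedGram V X N).trace ≤ V.trace + N * c := by
  rw [regularizedGram, trace_add, trace_sum]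
  gcongr
  calc ∑ s ∈ Finset.Icc 1 N, (vecMulVec (X s) (X s)).trace
      ≤ ∑ _s ∈ Finset.Icc 1 N, c := Finset.sum_le_sum fun s _ => by rw [trace_vecMulVec]; exact hX s
    _ = N * c := by simp

variable [DecidableEq n]

theorem dotProduct_inv_regularizedGram_mulVec_nonneg (hV : V.PosDef) (t : ℕ) (x : n → ℝ) :
    0 ≤ x ⬝ᵥ (regularizedGram V X t)⁻¹ *ᵥ x := by
  simpa using (posDef_regularizedGram X hV t).inv.posSemidef.dotProduct_mulVec_nonneg x

theorem det_regularizedGram_succ (hV : V.PosDef) (t : ℕ) :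
    (regularizedGram V X (t + 1)).det = (regularizedGram V X t).det *
      (1 + X (t + 1) ⬝ᵥ (regularizedGram V X t)⁻¹ *ᵥ X (t + 1)) := by
  rw [regularizedGram_succ, det_add_vecMulVec (posDef_regularizedGram X hV t).det_pos.ne'.isUnit]

theorem sum_log_one_add_eq_log_det_sub (hV : V.PosDef) (N : ℕ) :
    ∑ t ∈ Finset.Icc 1 N, Real.log (1 + X t ⬝ᵥ (regularizedGram V X (t - 1))⁻¹ *ᵥ X t) =
      Real.log (regularizedGram V X N).det - Real.log V.det := by
  induction N with
  | zero => simp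
  | succ N ih =>
    have hquad := dotProduct_inv_regularizedGram_mulVec_nonneg X hV N (X (N + 1))
    rw [Finset.sum_Icc_succ_top (by omega), ih, det_regularizedGram_succ X hV,
      Real.log_mul (posDef_regularizedGram X hV N).det_pos.ne' (by positivity),
      Nat.add_sub_cancel]
    ring

theorem sum_min_one_le_two_mul_log_det_sub (hV : V.PosDef) (N : ℕ) :
    ∑ t ∈ Finset.Icc 1 N, min 1 (X t ⬝ᵥ (regularizedGram V X (t - 1))⁻¹ *ᵥ X t) ≤
      2 * (Real.log (regularizedGram V X N).det - Real.log V.det) := by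
  rw [← sum_log_one_add_eq_log_det_sub X hV, Finset.mul_sum]
  exact Finset.sum_le_sum fun t _ => min_one_le_two_mul_log_one_add
    (dotProduct_inv_regularizedGram_mulVec_nonneg X hV _ _)

end RegularizedGram

theorem stmt_2 {d : ℕ} (X : ℕ → Fin d → ℝ) (L : ℝ)
    (hL : ∀ t, Real.sqrt (∑ i, X t i ^ 2) ≤ L)
    (V : Matrix (Fin d) (Fin d) ℝ) (hV : V.PosDef)
    (Vbar : ℕ → Matrix (Fin d) (Fin d) ℝ)
    (hVbar : ∀ t, Vbar t = V + ∑ s ∈ Finset.Icc 1 t, vecMulVec (X s) (X s)) :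
    ∀ n : ℕ, 1 ≤ n →
      (∑ t ∈ Finset.Icc 1 n, min 1 ((wnorm (Vbar (t - 1))⁻¹ (X t)) ^ 2) ≤
          2 * (Real.log (Vbar n).det - Real.log V.det)) ∧
      2 * (Real.log (Vbar n).det - Real.log V.det) ≤
        2 * (d * Real.log ((V.trace + n * L ^ 2) / d) - Real.log V.det) := by
  obtain rfl : Vbar = regularizedGram V X := funext hVbar
  have hX : ∀ t, X t ⬝ᵥ X t ≤ L ^ 2 := fun t => by
    simpa [dotProduct, sq] using (Real.sqrt_le_iff.mp (hL t)).2
  intro N _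
  refine ⟨?_, ?_⟩
  · calc ∑ t ∈ Finset.Icc 1 N, min 1 (wnorm (regularizedGram V X (t - 1))⁻¹ (X t) ^ 2)
        = ∑ t ∈ Finset.Icc 1 N, min 1 (X t ⬝ᵥ (regularizedGram V X (t - 1))⁻¹ *ᵥ X t) :=
          Finset.sum_congr rfl fun t _ => by
            rw [wnorm_sq (posDef_regularizedGram X hV _).inv.posSemidef]
      _ ≤ _ := sum_min_one_le_two_mul_log_det_sub X hV N
  · have hlogdet := (posDef_regularizedGram X hV N).log_det_le_card_mul_log_div_of_trace_le
      (trace_regularizedGram_le X hX N)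
    rw [Fintype.card_fin] at hlogdet
    linarith
end

section
/- Let A, B ∈ ℝ^{d×d} be symmetric positive definite matrices with B − A positive semidefinite (A ⪯ B) and det(B) ≤ 2·det(A). Then for every z ∈ ℝ^d, zᵀA^{-1}z ≤ 2·(zᵀB^{-1}z). -/
/-!
Conjugating by `A^{-1/2}` turns `A ≤ B` into `1 ≤ M := A^{-1/2} B A^{-1/2}`, and
`det M = det B / det A ≤ c`. All eigenvalues of `M` are at least `1`, so each of them is bounded by
their product `det M ≤ c`; hence `M ≤ c`, so `c⁻¹ ≤ M⁻¹`, and conjugating back gives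
`A⁻¹ ≤ c B⁻¹`.
-/

open Matrix Finset
open scoped MatrixOrder ComplexOrder

namespace Matrix
variable {n : Type*} [Fintype n] [DecidableEq n]

theorem le_det_smul_one_of_one_le {M : Matrix n n ℝ} (h : 1 ≤ M) : M ≤ M.det • 1 := by
  have hM : M.IsHermitian := (zero_le_one.trans h).posSemidef.isHermitian
  have hev : ∀ i, 1 ≤ hM.eigenvalues i := fun i =>
    (algebraMap_le_iff_le_spectrum (r := (1 : ℝ)) hM.isSelfAdjoint).1 (by simpa using h) _
      (hM.eigenvalues_mem_spectrum_real i)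
  rw [← Algebra.algebraMap_eq_smul_one, le_algebraMap_iff_spectrum_le hM.isSelfAdjoint,
    hM.spectrum_real_eq_range_eigenvalues, hM.det_eq_prod_eigenvalues]
  rintro _ ⟨i, rfl⟩
  calc hM.eigenvalues i = ∏ j ∈ {i}, hM.eigenvalues j := (prod_singleton _ _).symm
    _ ≤ ∏ j, hM.eigenvalues j :=
      prod_le_prod_of_subset_of_one_le (subset_univ _) (fun j _ => zero_le_one.trans (hev j))
        fun j _ _ => hev j
    _ = _ := by simp

theorem PosDef.inv_smul_one_le_inv {𝕜 : Type*} [RCLike 𝕜] {M : Matrix n n 𝕜} (hM : M.PosDef)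
    {c : ℝ} (h : M ≤ c • 1) : c⁻¹ • 1 ≤ M⁻¹ := by
  have hσ : ∀ x ∈ spectrum ℝ M, x ≤ c :=
    (le_algebraMap_iff_spectrum_le hM.isHermitian.isSelfAdjoint).1
      (by rwa [Algebra.algebraMap_eq_smul_one])
  rw [← Algebra.algebraMap_eq_smul_one,
    algebraMap_le_iff_le_spectrum hM.inv.isHermitian.isSelfAdjoint]
  lift M to (Matrix n n 𝕜)ˣ using hM.isUnit
  rw [← coe_units_inv, ← spectrum.map_inv]
  intro x hx
  have hx0 : 0 < x⁻¹ := hM.isStrictlyPositive.spectrum_pos hx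
  simpa using inv_anti₀ hx0 (hσ _ hx)

theorem PosDef.inv_le_smul_inv_of_le_of_det_le {A B : Matrix n n ℝ} (hA : A.PosDef) (hAB : A ≤ B)
    {c : ℝ} (hdet : B.det ≤ c * A.det) : A⁻¹ ≤ c • B⁻¹ := by
  set S := CFC.sqrt A
  have hSA : S * S = A := CFC.sqrt_mul_sqrt_self A hA.posSemidef.nonneg
  have hS : IsUnit S.det := (isUnit_iff_isUnit_det S).1 hA.isStrictlyPositive.isUnit_cfcSqrt
  have hSinv : IsSelfAdjoint S⁻¹ := (CFC.sqrt_nonneg A).posSemidef.inv.isHermitian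
  have hSinvS : S⁻¹ * S = 1 := nonsing_inv_mul S hS
  have hSSinv : S * S⁻¹ = 1 := mul_nonsing_inv S hS
  set M := S⁻¹ * B * S⁻¹
  have h1M : 1 ≤ M := by
    simpa [← hSA, ← Matrix.mul_assoc, hSinvS, hSSinv] using hSinv.conjugate_le_conjugate hAB
  have hM : M.PosDef := by simpa using PosDef.one.add_posSemidef (le_iff.1 h1M)
  have hdetM : M.det ≤ c := by
    have hdetSA : S⁻¹.det * S.det = 1 := det_nonsing_inv_mul_det S hS
    have : M.det * A.det = B.det := by
      simp only [M, ← hSA, det_mul]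
      linear_combination (B.det * (S⁻¹.det * S.det + 1)) * hdetSA
    rwa [← mul_le_mul_iff_left₀ hA.det_pos, this]
  have hc : 0 < c := hM.det_pos.trans_le hdetM
  have hMinv : S⁻¹ * M⁻¹ * S⁻¹ = B⁻¹ := by
    simp only [M, Matrix.mul_inv_rev, nonsing_inv_nonsing_inv S hS, ← Matrix.mul_assoc, hSinvS,
      Matrix.one_mul]
    rw [Matrix.mul_assoc, hSSinv, Matrix.mul_one]
  have h1Minv : 1 ≤ c • M⁻¹ := by
    have := smul_le_smul_of_nonneg_left
      (hM.inv_smul_one_le_inv ((le_det_smul_one_of_one_le h1M).trans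
        (smul_le_smul_of_nonneg_right hdetM zero_le_one))) hc.le
    rwa [smul_smul, mul_inv_cancel₀ hc.ne', one_smul] at this
  calc A⁻¹ = S⁻¹ * 1 * S⁻¹ := by rw [← hSA, Matrix.mul_inv_rev, Matrix.mul_one]
    _ ≤ S⁻¹ * (c • M⁻¹) * S⁻¹ := hSinv.conjugate_le_conjugate h1Minv
    _ = c • B⁻¹ := by rw [Matrix.mul_smul, Matrix.smul_mul, hMinv]

end Matrix

theorem stmt_18_general {d : ℕ} (A B : Matrix (Fin d) (Fin d) ℝ)
    (hA : A.PosDef) (hAB : (B - A).PosSemidef)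
    (hdet : B.det ≤ 2 * A.det) :
    ∀ z : Fin d → ℝ, z ⬝ᵥ A⁻¹.mulVec z ≤ 2 * (z ⬝ᵥ B⁻¹.mulVec z) := by
  intro z
  have hinv : A⁻¹ ≤ (2 : ℝ) • B⁻¹ := hA.inv_le_smul_inv_of_le_of_det_le (le_iff.2 hAB) hdet
  have h := (le_iff.1 hinv).dotProduct_mulVec_nonneg z
  rw [star_trivial, sub_mulVec, smul_mulVec, dotProduct_sub, dotProduct_smul, smul_eq_mul] at h
  linarith

theorem stmt_18 {d : ℕ} (A B : Matrix (Fin d) (Fin d) ℝ)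
    (hA : A.PosDef) (hB : B.PosDef) (hAB : (B - A).PosSemidef)
    (hdet : B.det ≤ 2 * A.det) :
    ∀ z : Fin d → ℝ, z ⬝ᵥ A⁻¹.mulVec z ≤ 2 * (z ⬝ᵥ B⁻¹.mulVec z) :=
  stmt_18_general A B hA hAB hdet
end
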